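/- Let Z be a unitary on ℂ^q with Z^n = 1 and let L = nM. Suppose |Ψ⟩ ∈ (ℂ^q)^{⊗L} is a simultaneous eigenvector of the cyclic shift T (eigenvalue λ) and of the global symmetry Z^{⊗L} (eigenvalue ω) with ω ≠ 1. Then the twisted state U|Ψ⟩, with U = ⊗_i Z^i, is an eigenvector of T with eigenvalue ω̄·λ ≠ λ, and consequently ⟨Ψ|U|Ψ⟩ = 0. -/

import Mathlib

open Matrix Complex

/-- The cyclic coordinate shift: `(shiftIdx L q g) i = g (i+1 mod L)`. -/
def shiftIdx (L q : ℕ) (g : Fin L → Fin q) : Fin L → Fin q :=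
  fun i => g ⟨(i.val + 1) % L, Nat.mod_lt _ (Nat.lt_of_le_of_lt (Nat.zero_le _) i.isLt)⟩

/-- The translation (cyclic shift) unitary on `(ℂ^q)^{⊗L}`, acting on basis vectors by
`|a_1 ... a_L⟩ ↦ |a_L a_1 ... a_{L-1}⟩`. -/
noncomputable def Tshift (L q : ℕ) : Matrix (Fin L → Fin q) (Fin L → Fin q) ℂ :=
  Matrix.of fun f g => if shiftIdx L q f = g then 1 else 0

/-- The tensor product operator `A_1 ⊗ ... ⊗ A_L` acting as `A_i` on the i-th factor of
`(ℂ^q)^{⊗L}`, given by entries `∏ i, (A i) (f i) (g i)`. -/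
noncomputable def tens (L q : ℕ) (A : Fin L → Matrix (Fin q) (Fin q) ℂ) :
    Matrix (Fin L → Fin q) (Fin L → Fin q) ℂ :=
  Matrix.of fun f g => ∏ i, A i (f i) (g i)

/-!
The site-dependent twist `U = ⊗ᵢ Z^(i+1)` commutes with the translation `T` up to one
global factor: `T U = U₀ T` with `U₀ = ⊗ᵢ Z^i = U (Z^{⊗L})⁻¹`, the wrap-around site being
harmless because `Z^L = 1`. Hence `T (UΨ) = ω⁻¹ λ UΨ`, and `ω⁻¹ = ω̄` because `ω^n = 1`.
Since `T` is a permutation matrix it is unitary, so `|λ| = 1` and the `T`-eigenvectors `Ψ`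
and `UΨ`, with eigenvalues `λ ≠ ω̄ λ`, are orthogonal.
-/

section Eigenvectors

variable {n R : Type*} [Fintype n]

lemma pow_mulVec_of_mulVec_eq_smul [DecidableEq n] [CommSemiring R] {V : Matrix n n R}
    {Ψ : n → R} {ω : R} (hV : V *ᵥ Ψ = ω • Ψ) (k : ℕ) : (V ^ k) *ᵥ Ψ = ω ^ k • Ψ := by
  induction k with
  | zero => simp
  | succ k ih => rw [pow_succ, ← mulVec_mulVec, hV, mulVec_smul, ih, smul_smul, pow_succ']

lemma pow_eq_one_of_mulVec_eq_smul [DecidableEq n] [CommRing R] [IsDomain R]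
    {V : Matrix n n R} {Ψ : n → R} {ω : R} {k : ℕ} (hVk : V ^ k = 1) (hΨ : Ψ ≠ 0)
    (hV : V *ᵥ Ψ = ω • Ψ) : ω ^ k = 1 := by
  have h := pow_mulVec_of_mulVec_eq_smul hV k
  rw [hVk, one_mulVec] at h
  exact smul_left_injective R hΨ (h.symm.trans (one_smul R Ψ).symm)

lemma star_dotProduct_eq_of_mem_unitaryGroup [DecidableEq n] [CommRing R] [StarRing R]
    {A : Matrix n n R} (hA : A ∈ unitaryGroup n R) {v w : n → R} {a b : R}
    (hv : A *ᵥ v = a • v) (hw : A *ᵥ w = b • w) :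
    star v ⬝ᵥ w = (star a * b) * (star v ⬝ᵥ w) := by
  calc star v ⬝ᵥ w = star v ⬝ᵥ ((star A * A) *ᵥ w) := by
        rw [mem_unitaryGroup_iff'.mp hA, one_mulVec]
    _ = star (A *ᵥ v) ⬝ᵥ (A *ᵥ w) := by
        rw [← mulVec_mulVec, dotProduct_mulVec, star_mulVec, star_eq_conjTranspose]
    _ = (star a * b) * (star v ⬝ᵥ w) := by
        rw [hv, hw, star_smul, smul_dotProduct, dotProduct_smul, smul_eq_mul, smul_eq_mul,
          mul_assoc]

lemma mulVec_mulVec_eq_inv_mul_smul [Field R] {T U U₀ V : Matrix n n R}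
    (hTU : T * U = U₀ * T) (hU : U = U₀ * V) {Ψ : n → R} {lam ω : R} (hω : ω ≠ 0)
    (hT : T *ᵥ Ψ = lam • Ψ) (hV : V *ᵥ Ψ = ω • Ψ) :
    T *ᵥ (U *ᵥ Ψ) = (ω⁻¹ * lam) • (U *ᵥ Ψ) := by
  have hUΨ : U *ᵥ Ψ = ω • (U₀ *ᵥ Ψ) := by rw [hU, ← mulVec_mulVec, hV, mulVec_smul]
  rw [mulVec_mulVec, hTU, ← mulVec_mulVec, hT, mulVec_smul, hUΨ, smul_smul,
    mul_right_comm, inv_mul_cancel₀ hω, one_mul]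

lemma Equiv.Perm.permMatrix_mem_unitaryGroup [DecidableEq n] (σ : Equiv.Perm n) :
    σ.permMatrix ℂ ∈ unitaryGroup n ℂ := by
  rw [mem_unitaryGroup_iff', star_eq_conjTranspose, conjTranspose_permMatrix,
    ← permMatrix_mul, mul_inv_cancel, permMatrix_one]

end Eigenvectors

section TensorProduct

variable {L q : ℕ}

lemma tens_mul (A B : Fin L → Matrix (Fin q) (Fin q) ℂ) :
    tens L q A * tens L q B = tens L q (A * B) := by
  ext f g
  simp only [tens, Matrix.mul_apply, of_apply, Pi.mul_apply, Finset.prod_univ_sum,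
    Fintype.piFinset_univ, Finset.prod_mul_distrib]

lemma tens_one : tens L q 1 = 1 := by
  ext f g
  simp [tens, Matrix.one_apply, Finset.prod_boole, funext_iff]

noncomputable def tensHom (L q : ℕ) :
    (Fin L → Matrix (Fin q) (Fin q) ℂ) →* Matrix (Fin L → Fin q) (Fin L → Fin q) ℂ where
  toFun := tens L q
  map_one' := tens_one
  map_mul' A B := (tens_mul A B).symm

lemma tens_pow (A : Fin L → Matrix (Fin q) (Fin q) ℂ) (k : ℕ) :
    tens L q A ^ k = tens L q (A ^ k) :=
  (map_pow (tensHom L q) A k).symm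

lemma tens_pow_val_succ (Z : Matrix (Fin q) (Fin q) ℂ) :
    (tens L q fun i => Z ^ (i.val + 1)) =
      (tens L q fun i => Z ^ i.val) * tens L q fun _ => Z := by
  rw [tens_mul]
  exact congrArg _ (funext fun i => pow_succ Z i.val)

end TensorProduct

lemma pow_val_add_one_of_pow_eq_one {G : Type*} [Monoid G] {L : ℕ} [NeZero L] {x : G}
    (hx : x ^ L = 1) (i : Fin L) : x ^ (i + 1).val = x ^ (i.val + 1) := by
  rw [Fin.val_add, Fin.val_one', Nat.add_mod_mod, ← pow_eq_pow_mod _ hx]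

section Translation

variable (L : ℕ) [NeZero L] (q : ℕ)

def shiftPerm : Equiv.Perm (Fin L → Fin q) where
  toFun f i := f (i + 1)
  invFun f i := f (i - 1)
  left_inv f := by simp
  right_inv f := by simp

lemma shiftIdx_eq_shiftPerm : shiftIdx L q = shiftPerm L q := by
  funext g i
  simp only [shiftIdx, shiftPerm, Equiv.coe_fn_mk]
  congr 1
  ext
  simp [Fin.val_add, Nat.add_mod_mod]

lemma Tshift_eq_permMatrix : Tshift L q = (shiftPerm L q).permMatrix ℂ := by
  ext f g
  simp [Tshift, PEquiv.toMatrix_apply, shiftIdx_eq_shiftPerm]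

lemma Tshift_mem_unitaryGroup : Tshift L q ∈ unitaryGroup (Fin L → Fin q) ℂ :=
  Tshift_eq_permMatrix L q ▸ (shiftPerm L q).permMatrix_mem_unitaryGroup

lemma Tshift_mul_tens (A : Fin L → Matrix (Fin q) (Fin q) ℂ) :
    Tshift L q * tens L q (fun i => A (i + 1)) = tens L q A * Tshift L q := by
  rw [Tshift_eq_permMatrix, PEquiv.toMatrix_toPEquiv_mul, PEquiv.mul_toMatrix_toPEquiv]
  ext f g
  simp only [tens, submatrix_apply, of_apply, id]
  exact Fintype.prod_equiv (Equiv.addRight 1) _ _ fun i => by simp [shiftPerm]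

lemma Tshift_mul_tens_pow_val {Z : Matrix (Fin q) (Fin q) ℂ} (hZ : Z ^ L = 1) :
    Tshift L q * (tens L q fun i => Z ^ (i.val + 1)) =
      (tens L q fun i => Z ^ i.val) * Tshift L q := by
  rw [← Tshift_mul_tens]
  simp only [pow_val_add_one_of_pow_eq_one hZ]

end Translation

theorem Zn_LSM_momentum_boost_general (q n M : ℕ) (hn : 0 < n) (hM : 0 < M)
    (Z : Matrix (Fin q) (Fin q) ℂ)
    (hZn : Z ^ n = 1) (lam ω : ℂ) (hω : ω ≠ 1)
    (Ψ : (Fin (n * M) → Fin q) → ℂ) (hΨ : Ψ ≠ 0)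
    (heigT : (Tshift (n * M) q).mulVec Ψ = lam • Ψ)
    (heigZ : (tens (n * M) q fun _ => Z).mulVec Ψ = ω • Ψ) :
    (Tshift (n * M) q).mulVec ((tens (n * M) q fun i => Z ^ (i.val + 1)).mulVec Ψ) =
        ((starRingEnd ℂ) ω * lam) • (tens (n * M) q fun i => Z ^ (i.val + 1)).mulVec Ψ ∧
      (starRingEnd ℂ) ω * lam ≠ lam ∧
      ∑ f, (starRingEnd ℂ) (Ψ f) *
        ((tens (n * M) q fun i => Z ^ (i.val + 1)).mulVec Ψ) f = 0 := by
  have : NeZero (n * M) := ⟨(Nat.mul_pos hn hM).ne'⟩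
  have hT := Tshift_mem_unitaryGroup (n * M) q
  have hω_norm : ‖ω‖ = 1 := by
    refine Complex.norm_eq_one_of_pow_eq_one (pow_eq_one_of_mulVec_eq_smul ?_ hΨ heigZ) hn.ne'
    rw [tens_pow, show (fun _ => Z) ^ n = 1 from funext fun _ => hZn, tens_one]
  have hlam : star lam * lam = 1 :=
    (right_eq_mul₀ (by open ComplexOrder in exact dotProduct_star_self_eq_zero.not.mpr hΨ)).mp
      (star_dotProduct_eq_of_mem_unitaryGroup hT heigT heigT)
  have hTU := Tshift_mul_tens_pow_val (n * M) q (by rw [pow_mul, hZn, one_pow] : Z ^ (n * M) = 1)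
  have boost := mulVec_mulVec_eq_inv_mul_smul hTU (tens_pow_val_succ Z)
    (norm_ne_zero_iff.mp (hω_norm ▸ one_ne_zero)) heigT heigZ
  rw [Complex.inv_eq_conj hω_norm] at boost
  have hconj : (starRingEnd ℂ) ω ≠ 1 := (map_ne_one_iff _ (starRingEnd ℂ).injective).mpr hω
  refine ⟨boost, fun h => hconj ((mul_eq_right₀ (right_ne_zero_of_mul_eq_one hlam)).mp h), ?_⟩
  refine eq_zero_of_mul_eq_self_left hconj ?_
  have h := star_dotProduct_eq_of_mem_unitaryGroup hT heigT boost
  rw [mul_left_comm, hlam, mul_one] at h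
  exact h.symm

/-- ℤ_n × T LSM momentum boost. If `Ψ` is a simultaneous eigenvector of the
cyclic shift `T` (eigenvalue `λ`) and of `Z^{⊗L}` (eigenvalue `ω ≠ 1`), then the twisted
state `UΨ` (`U = ⊗_i Z^i`) is a `T`-eigenvector with eigenvalue `ω̄ λ ≠ λ`, and
`⟨Ψ, U Ψ⟩ = 0`. -/
theorem Zn_LSM_momentum_boost (q n M : ℕ) (hq : 1 ≤ q) (hn : 0 < n) (hM : 0 < M)
    (Z : Matrix (Fin q) (Fin q) ℂ) (hZ : Z ∈ Matrix.unitaryGroup (Fin q) ℂ)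
    (hZn : Z ^ n = 1) (lam ω : ℂ) (hω : ω ≠ 1)
    (Ψ : (Fin (n * M) → Fin q) → ℂ) (hΨ : Ψ ≠ 0)
    (heigT : (Tshift (n * M) q).mulVec Ψ = lam • Ψ)
    (heigZ : (tens (n * M) q fun _ => Z).mulVec Ψ = ω • Ψ) :
    (Tshift (n * M) q).mulVec ((tens (n * M) q fun i => Z ^ (i.val + 1)).mulVec Ψ) =
        ((starRingEnd ℂ) ω * lam) • (tens (n * M) q fun i => Z ^ (i.val + 1)).mulVec Ψ ∧
      (starRingEnd ℂ) ω * lam ≠ lam ∧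
      ∑ f, (starRingEnd ℂ) (Ψ f) *
        ((tens (n * M) q fun i => Z ^ (i.val + 1)).mulVec Ψ) f = 0 :=
  Zn_LSM_momentum_boost_general q n M hn hM Z hZn lam ω hω Ψ hΨ heigT heigZ
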